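/- Let T > 0, let N ≥ 1 be an integer, and let a ∈ ℝ, q ≥ 0, ε ∈ ℝ with ε ≥ q², and c ≥ 0. Then there exists a unique continuously differentiable function η : [0,T] → ℝ satisfying the closed-loop Riccati equation η'(t) = 2(a + q)·η(t) + (1 − 1/N²)·η(t)² + q² − ε for all t ∈ [0,T], with terminal condition η(T) = c. Moreover, this solution satisfies η(t) ≥ 0 for all t ∈ [0,T]. -/

import Mathlib

/-!
Write `A = 2(a + q)`, `B = 1 - 1/N² ≥ 0` and `C = q² - ε ≤ 0`. The vector field
`y ↦ A y + B y² + C` is `C¹`, hence Lipschitz on the compact set swept out by any two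
solutions, so two solutions with the same terminal value coincide.

For existence the solution is explicit. When `B > 0` and `C ≤ 0` the quadratic factors as
`B (y - p)(y - m)` with roots `m ≤ 0 ≤ p`, and when `m < p` the solution is a Möbius
transform of `e = exp (B (p - m)(t - T)) ∈ (0, 1]` whose numerator and denominator are
nonnegative combinations of `c`, `p` and `-m`. The remaining cases are the double root
`p = m = 0`, where `η = c / (1 + B c (T - t))`, and `B = 0`, where the equation is linear.
-/

open Set Real

/-- `η` solves on `[0,T]` the Riccati ODE `η' = A·η + B·η² + C` with terminal
condition `η T = c`. -/
def SolvesRiccati (A B C T c : ℝ) (η : ℝ → ℝ) : Prop :=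
  (∀ t ∈ Set.Icc (0 : ℝ) T,
      HasDerivWithinAt η (A * η t + B * (η t) ^ 2 + C) (Set.Icc (0 : ℝ) T) t) ∧
    η T = c

theorem ODE_solution_unique_of_mem_Icc_left_of_locallyLipschitz {E : Type*}
    [NormedAddCommGroup E] [NormedSpace ℝ E] {f : E → E} (hf : LocallyLipschitz f)
    {a b : ℝ} {γ₁ γ₂ : ℝ → E}
    (h₁ : ∀ t ∈ Icc a b, HasDerivWithinAt γ₁ (f (γ₁ t)) (Icc a b) t)
    (h₂ : ∀ t ∈ Icc a b, HasDerivWithinAt γ₂ (f (γ₂ t)) (Icc a b) t)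
    (hb : γ₁ b = γ₂ b) : EqOn γ₁ γ₂ (Icc a b) := by
  have hc₁ : ContinuousOn γ₁ (Icc a b) := fun t ht => (h₁ t ht).continuousWithinAt
  have hc₂ : ContinuousOn γ₂ (Icc a b) := fun t ht => (h₂ t ht).continuousWithinAt
  obtain ⟨K, hK⟩ := hf.locallyLipschitzOn.exists_lipschitzOnWith_of_compact
    ((isCompact_Icc.image_of_continuousOn hc₁).union (isCompact_Icc.image_of_continuousOn hc₂))
  have h_left {γ : ℝ → E} (h : ∀ t ∈ Icc a b, HasDerivWithinAt γ (f (γ t)) (Icc a b) t) :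
      ∀ t ∈ Ioc a b, HasDerivWithinAt γ (f (γ t)) (Iic t) t := fun t ht =>
    (h t (Ioc_subset_Icc_self ht)).mono_of_mem_nhdsWithin (Icc_mem_nhdsLE_of_mem ht)
  exact ODE_solution_unique_of_mem_Icc_left (fun _ _ => hK) hc₁ (h_left h₁)
    (fun t ht => Or.inl (mem_image_of_mem γ₁ (Ioc_subset_Icc_self ht))) hc₂ (h_left h₂)
    (fun t ht => Or.inr (mem_image_of_mem γ₂ (Ioc_subset_Icc_self ht))) hb

theorem SolvesRiccati.eqOn {A B C T c : ℝ} {η₁ η₂ : ℝ → ℝ} (h₁ : SolvesRiccati A B C T c η₁)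
    (h₂ : SolvesRiccati A B C T c η₂) : EqOn η₁ η₂ (Icc 0 T) :=
  ODE_solution_unique_of_mem_Icc_left_of_locallyLipschitz (f := fun y => A * y + B * y ^ 2 + C)
    (ContDiff.locallyLipschitz (𝕂 := ℝ) (by fun_prop)) h₁.1 h₂.1 (h₁.2.trans h₂.2.symm)

theorem SolvesRiccati.of_hasDerivAt {A B C T c : ℝ} {η : ℝ → ℝ}
    (hη : ∀ t ≤ T, HasDerivAt η (A * η t + B * η t ^ 2 + C) t) (hT : η T = c) :
    SolvesRiccati A B C T c η :=
  ⟨fun t ht => (hη t ht.2).hasDerivWithinAt, hT⟩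

theorem hasDerivAt_exp_mul_sub (k T t : ℝ) :
    HasDerivAt (fun s => exp (k * (s - T))) (k * exp (k * (t - T))) t := by
  simpa [mul_comm] using (((hasDerivAt_id t).sub_const T).const_mul k).exp

theorem solvesRiccati_affine (C T c : ℝ) :
    SolvesRiccati 0 0 C T c (fun t => c + C * (t - T)) := by
  refine .of_hasDerivAt (fun t _ => ?_) (by simp)
  simpa using (((hasDerivAt_id t).sub_const T).const_mul C).const_add c

theorem solvesRiccati_linear {A : ℝ} (hA : A ≠ 0) (C T c : ℝ) :
    SolvesRiccati A 0 C T c (fun t => (c + C / A) * exp (A * (t - T)) - C / A) := by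
  refine .of_hasDerivAt (fun t _ => ?_) (by simp)
  refine (((hasDerivAt_exp_mul_sub A T t).const_mul (c + C / A)).sub_const (C / A)).congr_deriv ?_
  field_simp
  ring

theorem solvesRiccati_pure_quadratic {B T c : ℝ} (hBc : 0 ≤ B * c) :
    SolvesRiccati 0 B 0 T c (fun t => c / (1 + B * c * (T - t))) := by
  refine .of_hasDerivAt (fun t ht => ?_) (by simp)
  have hden : 1 + B * c * (T - t) ≠ 0 := by nlinarith
  have h_den : HasDerivAt (fun t => 1 + B * c * (T - t)) (-(B * c)) t := by
    simpa using (((hasDerivAt_id t).const_sub T).const_mul (B * c)).const_add 1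
  refine ((hasDerivAt_const t c).div h_den hden).congr_deriv ?_
  field_simp
  ring

/-- The solution is the Möbius transformation of `e = exp (B (p - m) (t - T))` sending
`0, 1, ∞` to `p, c, m`. -/
theorem solvesRiccati_factored {B p m T c : ℝ}
    (hden : ∀ t ≤ T, (c - m) - (c - p) * exp (B * (p - m) * (t - T)) ≠ 0) :
    SolvesRiccati (-(B * (p + m))) B (B * (p * m)) T c (fun t =>
      (p * (c - m) - m * (c - p) * exp (B * (p - m) * (t - T))) /
        ((c - m) - (c - p) * exp (B * (p - m) * (t - T)))) := by
  refine .of_hasDerivAt (fun t ht => ?_) ?_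
  · have hd := hden t ht
    refine ((((hasDerivAt_exp_mul_sub _ T t).const_mul (m * (c - p))).const_sub
      (p * (c - m))).div (((hasDerivAt_exp_mul_sub _ T t).const_mul (c - p)).const_sub (c - m))
      hd).congr_deriv ?_
    generalize exp (B * (p - m) * (t - T)) = e at hd ⊢
    field_simp
    ring
  · have hT := hden T le_rfl
    simp only [sub_self, mul_zero, exp_zero, mul_one] at hT ⊢
    rw [div_eq_iff hT]
    ring

theorem exists_solvesRiccati_linear_nonneg {A C T c : ℝ} (hC : C ≤ 0) (hc : 0 ≤ c) :
    ∃ η, SolvesRiccati A 0 C T c η ∧ ∀ t ∈ Icc 0 T, 0 ≤ η t := by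
  rcases eq_or_ne A 0 with rfl | hA
  · exact ⟨_, solvesRiccati_affine C T c, fun t ht => by nlinarith [ht.2]⟩
  refine ⟨_, solvesRiccati_linear hA C T c, fun t ht => ?_⟩
  have he : 0 < exp (A * (t - T)) := exp_pos _
  -- for `t ≤ T`, `C / A` and `exp (A (t - T)) - 1` have the same sign
  have h_sign : 0 ≤ C / A * (exp (A * (t - T)) - 1) := by
    rcases hA.lt_or_gt with hA | hA
    · exact mul_nonneg (div_nonneg_of_nonpos hC hA.le)
        (sub_nonneg.2 (one_le_exp (by nlinarith [ht.2])))
    · exact mul_nonneg_of_nonpos_of_nonpos (div_nonpos_of_nonpos_of_nonneg hC hA.le)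
        (sub_nonpos.2 (exp_le_one_iff.2 (by nlinarith [ht.2])))
  nlinarith [mul_nonneg hc he.le]

theorem exists_quadratic_roots_of_pos_of_nonpos {A B C : ℝ} (hB : 0 < B) (hC : C ≤ 0) :
    ∃ p m : ℝ, m ≤ 0 ∧ 0 ≤ p ∧ A = -(B * (p + m)) ∧ C = B * (p * m) := by
  have hD : 0 ≤ A ^ 2 - 4 * B * C := by nlinarith [sq_nonneg A]
  set s := √(A ^ 2 - 4 * B * C)
  have hs : s ^ 2 = A ^ 2 - 4 * B * C := sq_sqrt hD
  have hAs : |A| ≤ s := abs_le_sqrt (by nlinarith)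
  have hB2 : 0 < 2 * B := by positivity
  refine ⟨(-A + s) / (2 * B), (-A - s) / (2 * B), ?_, ?_, ?_, ?_⟩
  · exact div_nonpos_of_nonpos_of_nonneg (by linarith [neg_abs_le A]) hB2.le
  · exact div_nonneg (by linarith [le_abs_self A]) hB2.le
  · field_simp
    ring
  · field_simp
    linear_combination hs

theorem exists_solvesRiccati_nonneg {A B C T c : ℝ} (hB : 0 ≤ B) (hC : C ≤ 0) (hc : 0 ≤ c) :
    ∃ η, SolvesRiccati A B C T c η ∧ ∀ t ∈ Icc 0 T, 0 ≤ η t := by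
  rcases hB.eq_or_lt with rfl | hB
  · exact exists_solvesRiccati_linear_nonneg hC hc
  obtain ⟨p, m, hm, hp, rfl, rfl⟩ := exists_quadratic_roots_of_pos_of_nonpos (A := A) hB hC
  rcases hm.trans hp |>.eq_or_lt with rfl | hmp
  · obtain rfl : m = 0 := le_antisymm hm hp
    refine ⟨_, by simpa using solvesRiccati_pure_quadratic (T := T) (mul_nonneg hB.le hc),
      fun t ht => div_nonneg hc (by nlinarith [mul_nonneg hB.le hc, ht.2])⟩
  have he_le {t : ℝ} (ht : t ≤ T) : exp (B * (p - m) * (t - T)) ≤ 1 :=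
    exp_le_one_iff.2 (mul_nonpos_of_nonneg_of_nonpos (by nlinarith) (by linarith))
  -- the denominator is `c (1 - e) + (p - m) e + (-m)(1 - e)`
  have hden {t : ℝ} (ht : t ≤ T) : 0 < (c - m) - (c - p) * exp (B * (p - m) * (t - T)) := by
    nlinarith [he_le ht, exp_pos (B * (p - m) * (t - T))]
  refine ⟨_, solvesRiccati_factored fun t ht => (hden ht).ne',
    fun t ht => div_nonneg ?_ (hden ht.2).le⟩
  -- the numerator is `p c + (-m) c e + (-m) p (1 - e)`
  nlinarith [he_le ht.2, exp_pos (B * (p - m) * (t - T)), mul_nonneg hp hc,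
    mul_nonneg (neg_nonneg.2 hm) hc, mul_nonneg (neg_nonneg.2 hm) hp]

theorem closedLoop_riccati_existence_uniqueness_nonneg_general
    (T : ℝ) (N : ℕ) (hN : 1 ≤ N) (a q ε c : ℝ)
    (hε : q ^ 2 ≤ ε) (hc : 0 ≤ c) :
    ∃ η : ℝ → ℝ,
      SolvesRiccati (2 * (a + q)) (1 - 1 / (N : ℝ) ^ 2) (q ^ 2 - ε) T c η ∧
      (∀ t ∈ Set.Icc (0 : ℝ) T, 0 ≤ η t) ∧
      (∀ η' : ℝ → ℝ,
        SolvesRiccati (2 * (a + q)) (1 - 1 / (N : ℝ) ^ 2) (q ^ 2 - ε) T c η' →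
        ∀ t ∈ Set.Icc (0 : ℝ) T, η' t = η t) := by
  have hB : 0 ≤ 1 - 1 / (N : ℝ) ^ 2 :=
    sub_nonneg.2 (div_le_one_of_le₀ (one_le_pow₀ (by exact_mod_cast hN)) (by positivity))
  obtain ⟨η, hη, hη_nonneg⟩ := exists_solvesRiccati_nonneg (A := 2 * (a + q)) (T := T) hB
    (sub_nonpos.2 hε) hc
  exact ⟨η, hη, hη_nonneg, fun η' hη' => hη'.eqOn hη⟩

/-- Existence, uniqueness and nonnegativity of the solution of the closed-loop
Riccati equation `η'(t) = 2(a + q)·η(t) + (1 − 1/N²)·η(t)² + q² − ε`,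
`η(T) = c`, in the Carmona–Fouque–Sun systemic-risk model, under `ε ≥ q²`. -/
theorem closedLoop_riccati_existence_uniqueness_nonneg
    (T : ℝ) (hT : 0 < T) (N : ℕ) (hN : 1 ≤ N) (a q ε c : ℝ)
    (hq : 0 ≤ q) (hε : q ^ 2 ≤ ε) (hc : 0 ≤ c) :
    ∃ η : ℝ → ℝ,
      SolvesRiccati (2 * (a + q)) (1 - 1 / (N : ℝ) ^ 2) (q ^ 2 - ε) T c η ∧
      (∀ t ∈ Set.Icc (0 : ℝ) T, 0 ≤ η t) ∧
      (∀ η' : ℝ → ℝ,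
        SolvesRiccati (2 * (a + q)) (1 - 1 / (N : ℝ) ^ 2) (q ^ 2 - ε) T c η' →
        ∀ t ∈ Set.Icc (0 : ℝ) T, η' t = η t) :=
  closedLoop_riccati_existence_uniqueness_nonneg_general T N hN a q ε c hε hc
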